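/- Let S̃ be the matrix obtained from S by removing its first row and first column, and let v = (v_i)_{i≥1} be a bounded sequence of real numbers. Then S̃v = v (i.e. v_i = Σ_{j≥1} S̃_{i,j} v_j for all i ≥ 1) if and only if v_n = β(n) v_1 for all n ≥ 1. -/

import Mathlib

/-!
Row `N` of `S̃` only reaches the columns `≤ N + 1`, and its entry in column `N + 1` is a positive
product of the `p i`; so by induction a solution of `S̃ v = v` is determined by `v 1`, and it
remains to check that `β` is a solution.

If the digits of `N` end with `00(10)^s` or `00(10)^s 1`, a block of length `K = 2s` or `2s + 1`
below two zeros, then `N + 1 = H + F_K`, where `H` collects the digits above position `K + 1`.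
If `H ≠ 0`, then `N`, `N + 1` and all jump targets `N + 1 - F_j` (`j ≤ K`) lie in one interval
`[F_t, F_{t+1})`, on which `β` is constant, and the row sums of `S` are `1`. If `H = 0`, then
`β(N + 1) = Π_K` while `β` is `Π_{K-1}` at `N` and at all jump targets that are `≥ 1`, and the
equation reduces to `p_{⌊(K-1)/2⌋+2} Π_K = Π_{K-1}`.
-/

/-- Fibonacci sequence with `F 0 = 1`, `F 1 = 2`, `F (n+2) = F (n+1) + F n`. -/
def fibF : ℕ → ℕ
  | 0 => 1
  | 1 => 2
  | (n+2) => fibF (n+1) + fibF n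

lemma fibF_pos : ∀ n, 0 < fibF n
  | 0 => by simp [fibF]
  | 1 => by simp [fibF]
  | (n+2) => by
      have h1 := fibF_pos (n+1)
      simp only [fibF]
      omega

/-- Zeckendorf digits of `N` in the base `fibF`: `N = ∑ i, zeck N i * fibF i`,
with `zeck N i ∈ {0,1}` and no two consecutive `1`'s. -/
def zeck (N i : ℕ) : ℕ :=
  if h : N = 0 then 0
  else if i = Nat.findGreatest (fun j => fibF j ≤ N) N then 1
  else zeck (N - fibF (Nat.findGreatest (fun j => fibF j ≤ N) N)) i
termination_by N
decreasing_by
  exact Nat.sub_lt (Nat.pos_of_ne_zero h) (fibF_pos _)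

lemma zeck_eq_zero_of_lt : ∀ N, ∀ i, N < i → zeck N i = 0 := by
  intro N
  induction N using Nat.strong_induction_on with
  | _ N ih =>
    intro i hi
    rw [zeck]
    split
    · rfl
    · rename_i h
      have hkN : Nat.findGreatest (fun j => fibF j ≤ N) N ≤ N := Nat.findGreatest_le N
      rw [if_neg (by omega)]
      exact ih _ (Nat.sub_lt (Nat.pos_of_ne_zero h) (fibF_pos _)) i
        (lt_of_le_of_lt (Nat.sub_le _ _) hi)

lemma exists_break0 (N : ℕ) : ∃ i, ¬(zeck N (2*i+1) = 1 ∧ zeck N (2*i) = 0) := by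
  refine ⟨N + 1, ?_⟩
  have h : zeck N (2*(N+1)+1) = 0 := zeck_eq_zero_of_lt N _ (by omega)
  simp [h]

lemma exists_break1 (N : ℕ) : ∃ i, ¬(zeck N (2*i+2) = 1 ∧ zeck N (2*i+1) = 0) := by
  refine ⟨N + 1, ?_⟩
  have h : zeck N (2*(N+1)+2) = 0 := zeck_eq_zero_of_lt N _ (by omega)
  simp [h]

/-- The number `s` of `10`-blocks carried in the stochastic Fibonacci adding machine:
if the digits of `N` end with `00(10)^s` (case `ε₀ = 0`) or with `00(10)^s1`
(case `ε₀ = 1`), this returns `s`. -/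
def carryLen (N : ℕ) : ℕ :=
  if zeck N 0 = 0 then Nat.find (exists_break0 N) else Nat.find (exists_break1 N)

/-- `Pprod p t = p 1 * p 2 * ⋯ * p t`. -/
def Pprod (p : ℕ → ℝ) (t : ℕ) : ℝ := ∏ i ∈ Finset.Icc 1 t, p i

/-- The transition matrix `S` of the Fibonacci stochastic adding machine associated to
the probability sequence `p`:  `S N N = 1 - p 1`;  if the digits of `N` end with
`00(10)^s` then `S N (N+1) = p 1 ⋯ p (s+1)` and `S N (N+1-F (2m)) = p 1 ⋯ p m * (1 - p (m+1))`
for `1 ≤ m ≤ s`;  if the digits of `N` end with `00(10)^s1` then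
`S N (N+1) = p 1 ⋯ p (s+2)` and `S N (N+1-F (2m-1)) = p 1 ⋯ p m * (1 - p (m+1))` for
`1 ≤ m ≤ s+1`;  all other entries vanish. -/
noncomputable def Smat (p : ℕ → ℝ) (N M : ℕ) : ℝ :=
  (if M = N then 1 - p 1 else 0) +
  if zeck N 0 = 0 then
    (if M = N + 1 then Pprod p (carryLen N + 1) else 0) +
    ∑ m ∈ Finset.Icc 1 (carryLen N),
      (if M = N + 1 - fibF (2*m) then Pprod p m * (1 - p (m+1)) else 0)
  else
    (if M = N + 1 then Pprod p (carryLen N + 2) else 0) +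
    ∑ m ∈ Finset.Icc 1 (carryLen N + 1),
      (if M = N + 1 - fibF (2*m - 1) then Pprod p m * (1 - p (m+1)) else 0)

/-- `PiProd p r = Π_r`, i.e. `Π_{2n} = ∏_{i=2}^{n+1} 1/p_i²` and
`Π_{2n+1} = (1/p_{n+2}) ∏_{i=2}^{n+1} 1/p_i²`. -/
noncomputable def PiProd (p : ℕ → ℝ) (r : ℕ) : ℝ :=
  (∏ i ∈ Finset.Icc 2 (r/2 + 1), (1 / p i)^2) * (if r % 2 = 1 then 1 / p (r/2 + 2) else 1)

/-- `betaFn p n = β(n) = Π_r` where `r` is the unique index with `F_r ≤ n < F_{r+1}`. -/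
noncomputable def betaFn (p : ℕ → ℝ) (n : ℕ) : ℝ :=
  PiProd p (Nat.findGreatest (fun r => fibF r ≤ n) n)

lemma fibF_add_two (n : ℕ) : fibF (n + 2) = fibF (n + 1) + fibF n := rfl

lemma fibF_lt_succ : ∀ n, fibF n < fibF (n + 1)
  | 0 => by simp [fibF]
  | n + 1 => by have := fibF_pos n; simp only [fibF]; omega

lemma fibF_strictMono : StrictMono fibF := strictMono_nat_of_lt_succ fibF_lt_succ

lemma fibF_mono : Monotone fibF := fibF_strictMono.monotone

lemma lt_fibF : ∀ n, n < fibF n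
  | 0 => by simp [fibF]
  | 1 => by simp [fibF]
  | n + 2 => by have := lt_fibF (n + 1); have := fibF_pos n; simp only [fibF]; omega

lemma fibF_add_fibF_le_of_lt {j K : ℕ} (h : j < K) : fibF j + fibF K ≤ fibF (K + 1) := by
  obtain ⟨k, rfl⟩ : ∃ k, K = k + 1 := ⟨K - 1, by omega⟩
  have := fibF_mono (show j ≤ k by omega)
  rw [fibF_add_two]
  omega

section SparseSums

variable {d : ℕ → ℕ}

lemma sum_range_mul_fibF_lt (hd : ∀ i, d i + d (i + 1) ≤ 1) :
    ∀ n, ∑ i ∈ Finset.range n, d i * fibF i < fibF n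
  | 0 => by simp [fibF]
  | 1 => by have := hd 0; simp [fibF]; omega
  | n + 2 => by
    have ih₁ := sum_range_mul_fibF_lt hd (n + 1)
    have ih₀ := sum_range_mul_fibF_lt hd n
    have := fibF_lt_succ n
    rw [Finset.sum_range_succ, fibF_add_two]
    rcases Nat.le_one_iff_eq_zero_or_eq_one.mp (by have := hd (n + 1); omega : d (n + 1) ≤ 1)
      with h | h
    · rw [h, zero_mul, add_zero]
      omega
    · rw [Finset.sum_range_succ, show d n = 0 by have := hd n; omega, h]
      omega

lemma sum_range_mul_fibF_add_one_lt (hd : ∀ i, d i + d (i + 1) ≤ 1) {j : ℕ} (hj : d j = 0)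
    (hj₁ : d (j + 1) = 0) :
    ∀ n, j + 1 ≤ n → ∑ i ∈ Finset.range n, d i * fibF i + 1 < fibF n := by
  intro n hn
  induction n using Nat.strong_induction_on with
  | _ n ih =>
    obtain rfl | hn := hn.eq_or_lt
    · have := sum_range_mul_fibF_lt hd j
      have := fibF_lt_succ j
      rw [Finset.sum_range_succ, hj, zero_mul, add_zero]
      omega
    obtain ⟨n, rfl⟩ : ∃ m, n = m + 1 := ⟨n - 1, by omega⟩
    have := fibF_lt_succ n
    rw [Finset.sum_range_succ]
    rcases Nat.le_one_iff_eq_zero_or_eq_one.mp (by have := hd n; omega : d n ≤ 1) with h | h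
    · have := ih n (by omega) (by omega)
      rw [h, zero_mul, add_zero]
      omega
    have hnj : n ≠ j := by rintro rfl; omega
    have hnj₁ : n ≠ j + 1 := by rintro rfl; omega
    obtain ⟨m, rfl⟩ : ∃ m, n = m + 1 := ⟨n - 1, by omega⟩
    have := ih m (by omega) (by omega)
    rw [Finset.sum_range_succ, show d m = 0 by have := hd m; omega, h, fibF_add_two]
    omega

end SparseSums

/-- The index `r` with `fibF r ≤ n < fibF (r + 1)` (for `n ≥ 1`), computed as in `zeck` and
`betaFn`. -/
def fibIndex (n : ℕ) : ℕ := Nat.findGreatest (fun r => fibF r ≤ n) n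

lemma fibIndex_le (n : ℕ) : fibIndex n ≤ n := Nat.findGreatest_le n

lemma fibF_fibIndex_le {n : ℕ} (hn : n ≠ 0) : fibF (fibIndex n) ≤ n :=
  Nat.findGreatest_spec (P := fun r => fibF r ≤ n) (Nat.zero_le n) (by simp [fibF]; omega)

lemma lt_fibF_fibIndex_succ (n : ℕ) : n < fibF (fibIndex n + 1) := by
  by_contra! h
  have := Nat.le_findGreatest (P := fun r => fibF r ≤ n) ((lt_fibF _).le.trans h) h
  exact (fibIndex n).lt_succ_self.not_ge this

lemma fibIndex_eq {n t : ℕ} (h₁ : fibF t ≤ n) (h₂ : n < fibF (t + 1)) : fibIndex n = t := by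
  refine Nat.findGreatest_eq_iff.mpr ⟨((lt_fibF t).trans_le h₁).le, fun _ => h₁, ?_⟩
  intro k hk _
  exact (h₂.trans_le (fibF_mono (by omega))).not_ge

lemma sub_fibF_fibIndex_lt (N : ℕ) : N - fibF (fibIndex N) < fibF (fibIndex N - 1) := by
  have h := lt_fibF_fibIndex_succ N
  generalize fibIndex N = t at h ⊢
  rcases t with _ | t
  · norm_num [fibF] at h ⊢
    omega
  · have := fibF_pos t
    rw [fibF_add_two] at h
    simp only [Nat.add_sub_cancel]
    omega

lemma zeck_zero_left (i : ℕ) : zeck 0 i = 0 := by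
  rw [zeck]; simp

lemma zeck_fibIndex {N : ℕ} (hN : N ≠ 0) : zeck N (fibIndex N) = 1 := by
  rw [zeck, dif_neg hN]
  exact if_pos rfl

lemma zeck_of_ne_fibIndex {N i : ℕ} (hN : N ≠ 0) (hi : i ≠ fibIndex N) :
    zeck N i = zeck (N - fibF (fibIndex N)) i := by
  rw [zeck, dif_neg hN]
  exact if_neg hi

lemma zeck_eq_zero_of_lt_fibF : ∀ {N i : ℕ}, N < fibF i → zeck N i = 0 := by
  intro N
  induction N using Nat.strong_induction_on with
  | _ N ih =>
    intro i hi
    rcases eq_or_ne N 0 with rfl | hN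
    · exact zeck_zero_left i
    have := fibF_fibIndex_le hN
    have hi' : i ≠ fibIndex N := by rintro rfl; omega
    rw [zeck_of_ne_fibIndex hN hi']
    exact ih _ (Nat.sub_lt (Nat.pos_of_ne_zero hN) (fibF_pos _)) (by omega)

lemma zeck_add_zeck_succ_le_one : ∀ N i : ℕ, zeck N i + zeck N (i + 1) ≤ 1 := by
  intro N
  induction N using Nat.strong_induction_on with
  | _ N ih =>
    intro i
    rcases eq_or_ne N 0 with rfl | hN
    · simp [zeck_zero_left]
    by_cases hi : i = fibIndex N
    · subst hi
      rw [zeck_fibIndex hN, zeck_eq_zero_of_lt_fibF (lt_fibF_fibIndex_succ N)]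
    rw [zeck_of_ne_fibIndex hN hi]
    by_cases hi₁ : i + 1 = fibIndex N
    · have := sub_fibF_fibIndex_lt N
      rw [← hi₁, Nat.add_sub_cancel] at this
      rw [← hi₁, zeck_eq_zero_of_lt_fibF this, hi₁, zeck_fibIndex hN]
    rw [zeck_of_ne_fibIndex hN hi₁]
    exact ih _ (Nat.sub_lt (Nat.pos_of_ne_zero hN) (fibF_pos _)) i

lemma zeck_le_one (N i : ℕ) : zeck N i ≤ 1 := by
  have := zeck_add_zeck_succ_le_one N i
  omega

lemma sum_range_zeck_mul_fibF : ∀ {N n : ℕ}, N < fibF n →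
    ∑ i ∈ Finset.range n, zeck N i * fibF i = N := by
  intro N
  induction N using Nat.strong_induction_on with
  | _ N ih =>
    intro n hn
    rcases eq_or_ne N 0 with rfl | hN
    · simp [zeck_zero_left]
    have hle := fibF_fibIndex_le hN
    have ht : fibIndex N ∈ Finset.range n :=
      Finset.mem_range.mpr (fibF_strictMono.lt_iff_lt.mp (hle.trans_lt hn))
    have hM : N - fibF (fibIndex N) < fibF (fibIndex N) :=
      (sub_fibF_fibIndex_lt N).trans_le (fibF_mono (Nat.sub_le _ 1))
    rw [← Finset.add_sum_erase _ _ ht, zeck_fibIndex hN, one_mul,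
      Finset.sum_congr rfl fun i hi => by rw [zeck_of_ne_fibIndex hN (Finset.ne_of_mem_erase hi)],
      Finset.sum_erase _ (by rw [zeck_eq_zero_of_lt_fibF hM, zero_mul]),
      ih _ (Nat.sub_lt (Nat.pos_of_ne_zero hN) (fibF_pos _)) (by omega)]
    omega

lemma sum_range_mul_fibF_alternating {d : ℕ → ℕ} {e : ℕ} (he : e ≤ 1) (hd₀ : d 0 = e) :
    ∀ s, (∀ j < s, d (2 * j + e + 1) = 1 ∧ d (2 * j + e) = 0) →
      ∑ i ∈ Finset.range (2 * s + e), d i * fibF i + 1 = fibF (2 * s + e)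
  | 0, _ => by
    rcases Nat.le_one_iff_eq_zero_or_eq_one.mp he with rfl | rfl <;> simp [hd₀, fibF]
  | s + 1, hblock => by
    have ih := sum_range_mul_fibF_alternating he hd₀ s fun j hj => hblock j (by omega)
    obtain ⟨h₁, h₀⟩ := hblock s (by omega)
    rw [show 2 * (s + 1) + e = 2 * s + e + 1 + 1 by ring, Finset.sum_range_succ,
      Finset.sum_range_succ, h₁, h₀, fibF_add_two]
    omega

lemma carryLen_spec (N : ℕ) :
    (∀ j < carryLen N, zeck N (2 * j + zeck N 0 + 1) = 1 ∧ zeck N (2 * j + zeck N 0) = 0) ∧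
    ¬(zeck N (2 * carryLen N + zeck N 0 + 1) = 1 ∧ zeck N (2 * carryLen N + zeck N 0) = 0) := by
  rcases Nat.le_one_iff_eq_zero_or_eq_one.mp (zeck_le_one N 0) with h | h
  · rw [carryLen, if_pos h, h]
    exact ⟨fun j hj => not_not.mp (Nat.find_min _ hj), Nat.find_spec (exists_break0 N)⟩
  · rw [carryLen, if_neg (by omega), h]
    exact ⟨fun j hj => not_not.mp (Nat.find_min _ hj), Nat.find_spec (exists_break1 N)⟩

/-- The length `2s` or `2s + 1` of the final block `(10)^s` or `(10)^s 1` of the digits of `N`. -/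
def tailLen (N : ℕ) : ℕ := 2 * carryLen N + zeck N 0

lemma zeck_tailLen_spec (N : ℕ) :
    ∑ i ∈ Finset.range (tailLen N), zeck N i * fibF i + 1 = fibF (tailLen N) ∧
      zeck N (tailLen N) = 0 ∧ zeck N (tailLen N + 1) = 0 := by
  obtain ⟨hblock, hstop⟩ := carryLen_spec N
  have hsparse := zeck_add_zeck_succ_le_one N
  have hK : zeck N (tailLen N) = 0 := by
    rcases Nat.eq_zero_or_pos (carryLen N) with hs | hs
    · rcases Nat.le_one_iff_eq_zero_or_eq_one.mp (zeck_le_one N 0) with h | h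
      · rw [tailLen, hs, h]
        exact h
      · have := hsparse 0
        rw [h] at this
        rw [tailLen, hs, h]
        simpa using this
    · have := (hblock (carryLen N - 1) (by omega)).1
      have := hsparse (2 * (carryLen N - 1) + zeck N 0 + 1)
      rw [tailLen, show 2 * carryLen N + zeck N 0 = 2 * (carryLen N - 1) + zeck N 0 + 1 + 1 by
        omega]
      omega
  refine ⟨sum_range_mul_fibF_alternating (zeck_le_one N 0) rfl _ hblock, hK, ?_⟩
  have := hsparse (tailLen N + 1)
  simp only [tailLen] at hK this ⊢
  omega

lemma succ_eq_fibF_or_fibF_bounds {N K : ℕ}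
    (hlow : ∑ i ∈ Finset.range K, zeck N i * fibF i + 1 = fibF K) (hK : zeck N K = 0)
    (hK₁ : zeck N (K + 1) = 0) :
    N + 1 = fibF K ∨ ∃ t, fibF t + fibF K ≤ N + 1 ∧ N + 1 < fibF (t + 1) := by
  have hlow₂ : ∑ i ∈ Finset.range (K + 2), zeck N i * fibF i + 1 = fibF K := by
    rw [Finset.sum_range_succ, Finset.sum_range_succ, hK, hK₁]
    simpa using hlow
  by_cases ht : fibIndex N + 1 ≤ K + 2
  · left
    have := sum_range_zeck_mul_fibF ((lt_fibF_fibIndex_succ N).trans_le (fibF_mono ht))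
    omega
  have hN : N ≠ 0 := by have := fibIndex_le N; omega
  have hsum := sum_range_zeck_mul_fibF (lt_fibF_fibIndex_succ N)
  right
  refine ⟨fibIndex N, ?_, ?_⟩
  · rw [Finset.sum_range_succ, zeck_fibIndex hN, one_mul] at hsum
    have := Finset.sum_le_sum_of_subset (f := fun i => zeck N i * fibF i)
      (Finset.range_subset_range.mpr (by omega : K + 2 ≤ fibIndex N))
    omega
  · have := sum_range_mul_fibF_add_one_lt (zeck_add_zeck_succ_le_one N) hK hK₁ _
      (by omega : K + 1 ≤ fibIndex N + 1)
    rwa [hsum] at this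

section TransitionMatrix

variable (p : ℕ → ℝ)

lemma Pprod_succ (t : ℕ) : Pprod p (t + 1) = Pprod p t * p (t + 1) :=
  Finset.prod_Icc_succ_top (by omega) p

lemma Pprod_pos (hp : ∀ i, 1 ≤ i → 0 < p i) (t : ℕ) : 0 < Pprod p t :=
  Finset.prod_pos fun i hi => hp i (Finset.mem_Icc.mp hi).1

lemma sum_Icc_Pprod_mul_one_sub (c : ℕ) :
    ∑ m ∈ Finset.Icc 1 c, Pprod p m * (1 - p (m + 1)) = p 1 - Pprod p (c + 1) := by
  induction c with
  | zero => simp [Pprod]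
  | succ c ih =>
    rw [Finset.sum_Icc_succ_top (by omega), ih, Pprod_succ p (c + 1)]
    ring

lemma Smat_eq (N M : ℕ) : Smat p N M =
    (if M = N then 1 - p 1 else 0) +
      ((if M = N + 1 then Pprod p (carryLen N + zeck N 0 + 1) else 0) +
        ∑ m ∈ Finset.Icc 1 (carryLen N + zeck N 0),
          if M = N + 1 - fibF (2 * m - zeck N 0) then Pprod p m * (1 - p (m + 1)) else 0) := by
  rcases Nat.le_one_iff_eq_zero_or_eq_one.mp (zeck_le_one N 0) with h | h
  · simp only [Smat, h, ↓reduceIte, add_zero, Nat.sub_zero]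
  · simp only [Smat, h, ↓reduceIte, one_ne_zero]

lemma Smat_eq_zero_of_lt {N M : ℕ} (hM : N + 1 < M) : Smat p N M = 0 := by
  rw [Smat_eq, if_neg (by omega), if_neg (by omega),
    Finset.sum_eq_zero fun m _ => if_neg (by omega)]
  simp

lemma Smat_self_succ (N : ℕ) : Smat p N (N + 1) = Pprod p (carryLen N + zeck N 0 + 1) := by
  rw [Smat_eq, if_neg (by omega), if_pos rfl,
    Finset.sum_eq_zero fun m _ => if_neg (by have := fibF_pos (2 * m - zeck N 0); omega)]
  simp

lemma tsum_Smat_mul (w : ℕ → ℝ) (N : ℕ) :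
    ∑' j, Smat p N (j + 1) * w (j + 1) =
      ∑ j ∈ Finset.range (N + 1), Smat p N (j + 1) * w (j + 1) :=
  tsum_eq_sum fun j hj => by
    rw [Smat_eq_zero_of_lt p (by simpa using hj), zero_mul]

lemma sum_range_ite_succ_eq_mul {n M : ℕ} (hM : M ≤ n + 1) (a : ℝ) (w : ℕ → ℝ) :
    ∑ j ∈ Finset.range (n + 1), (if j + 1 = M then a else 0) * w (j + 1) =
      if 1 ≤ M then a * w M else 0 := by
  rcases M with _ | M
  · simp
  · simp [Finset.sum_ite_eq', show M < n + 1 by omega]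

lemma sum_range_Smat_mul (w : ℕ → ℝ) {N : ℕ} (hN : 1 ≤ N) :
    ∑ j ∈ Finset.range (N + 1), Smat p N (j + 1) * w (j + 1) =
      (1 - p 1) * w N + Pprod p (carryLen N + zeck N 0 + 1) * w (N + 1) +
        ∑ m ∈ Finset.Icc 1 (carryLen N + zeck N 0),
          if fibF (2 * m - zeck N 0) ≤ N then
            Pprod p m * (1 - p (m + 1)) * w (N + 1 - fibF (2 * m - zeck N 0))
          else 0 := by
  simp only [Smat_eq, add_mul, Finset.sum_add_distrib, Finset.sum_mul]
  rw [Finset.sum_comm (s := Finset.range (N + 1)), sum_range_ite_succ_eq_mul (by omega),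
    sum_range_ite_succ_eq_mul le_rfl, if_pos hN, if_pos (by omega), ← add_assoc]
  congr 1
  refine Finset.sum_congr rfl fun m _ => ?_
  rw [sum_range_ite_succ_eq_mul (by omega)]
  exact if_congr (by omega) rfl rfl

end TransitionMatrix

section Beta

variable (p : ℕ → ℝ)

lemma PiProd_zero : PiProd p 0 = 1 := by simp [PiProd]

lemma mul_PiProd_succ (K : ℕ) (hK : p (K / 2 + 2) ≠ 0) :
    p (K / 2 + 2) * PiProd p (K + 1) = PiProd p K := by
  unfold PiProd
  obtain ⟨k, rfl | rfl⟩ := Nat.even_or_odd' K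
  · rw [show 2 * k / 2 = k by omega, show (2 * k + 1) / 2 = k by omega,
      if_pos (by omega), if_neg (by omega)] at *
    field_simp
  · rw [show (2 * k + 1) / 2 = k by omega, show (2 * k + 1 + 1) / 2 = k + 1 by omega,
      if_neg (by omega), if_pos (by omega), Finset.prod_Icc_succ_top (by omega)] at *
    field_simp

lemma betaFn_eq_PiProd {n t : ℕ} (h₁ : fibF t ≤ n) (h₂ : n < fibF (t + 1)) :
    betaFn p n = PiProd p t :=
  congrArg (PiProd p) (fibIndex_eq h₁ h₂)

lemma betaFn_one : betaFn p 1 = 1 := by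
  rw [betaFn_eq_PiProd p (t := 0) (by simp [fibF]) (by simp [fibF]), PiProd_zero]

lemma row_betaFn_of_fibF_bounds {N c e K t : ℕ} (hK : K + e = 2 * c)
    (hlo : fibF t + fibF K ≤ N + 1) (hhi : N + 1 < fibF (t + 1)) :
    (1 - p 1) * betaFn p N + Pprod p (c + 1) * betaFn p (N + 1) +
      ∑ m ∈ Finset.Icc 1 c,
        (if fibF (2 * m - e) ≤ N then
          Pprod p m * (1 - p (m + 1)) * betaFn p (N + 1 - fibF (2 * m - e))
        else 0) = betaFn p N := by
  have := fibF_pos K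
  have := fibF_pos t
  -- `N`, `N + 1` and every jump target lie in `[fibF t, fibF (t + 1))`
  have hβ : ∀ n, N + 1 - fibF K ≤ n → n ≤ N + 1 → betaFn p n = PiProd p t :=
    fun n h₁ h₂ => betaFn_eq_PiProd p (by omega) (by omega)
  have hterm : ∀ m ∈ Finset.Icc 1 c,
      (if fibF (2 * m - e) ≤ N then
        Pprod p m * (1 - p (m + 1)) * betaFn p (N + 1 - fibF (2 * m - e)) else 0) =
      Pprod p m * (1 - p (m + 1)) * PiProd p t := by
    intro m hm
    have := fibF_mono (show 2 * m - e ≤ K by have := (Finset.mem_Icc.mp hm).2; omega)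
    rw [if_pos (by omega), hβ _ (by omega) (by omega)]
  rw [Finset.sum_congr rfl hterm, ← Finset.sum_mul, sum_Icc_Pprod_mul_one_sub,
    hβ N (by omega) (by omega), hβ (N + 1) (by omega) le_rfl]
  ring

lemma row_betaFn_of_succ_eq_fibF (hp : ∀ i, 1 ≤ i → 0 < p i) {N c e K : ℕ} (he : e ≤ 1)
    (hK : K + e = 2 * c) (hN : 1 ≤ N) (hNK : N + 1 = fibF K) :
    (1 - p 1) * betaFn p N + Pprod p (c + 1) * betaFn p (N + 1) +
      ∑ m ∈ Finset.Icc 1 c,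
        (if fibF (2 * m - e) ≤ N then
          Pprod p m * (1 - p (m + 1)) * betaFn p (N + 1 - fibF (2 * m - e))
        else 0) = betaFn p N := by
  obtain ⟨K, rfl⟩ : ∃ k, K = k + 1 := ⟨K - 1, by
    rcases K with _ | K
    · simp [fibF] at hNK; omega
    · omega⟩
  obtain ⟨c, rfl⟩ : ∃ k, c = k + 1 := ⟨c - 1, by omega⟩
  have := fibF_pos K
  have := fibF_lt_succ K
  have := fibF_lt_succ (K + 1)
  have hterm : ∀ m ∈ Finset.Icc 1 c,
      (if fibF (2 * m - e) ≤ N then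
        Pprod p m * (1 - p (m + 1)) * betaFn p (N + 1 - fibF (2 * m - e)) else 0) =
      Pprod p m * (1 - p (m + 1)) * PiProd p K := by
    intro m hm
    obtain ⟨hm₁, hm₂⟩ := Finset.mem_Icc.mp hm
    have := fibF_add_fibF_le_of_lt (show 2 * m - e < K by omega)
    have := fibF_pos (2 * m - e)
    rw [if_pos (by omega), betaFn_eq_PiProd p (t := K) (by omega) (by omega)]
  have hkey := mul_PiProd_succ p K (hp _ (by omega)).ne'
  rw [show K / 2 = c by omega] at hkey
  rw [Finset.sum_Icc_succ_top (by omega),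
    if_neg (by rw [show 2 * (c + 1) - e = K + 1 by omega]; omega), add_zero,
    Finset.sum_congr rfl hterm, ← Finset.sum_mul, sum_Icc_Pprod_mul_one_sub,
    betaFn_eq_PiProd p (t := K) (by omega) (by omega),
    betaFn_eq_PiProd p (t := K + 1) (by omega) (by omega), Pprod_succ p (c + 1)]
  linear_combination Pprod p (c + 1) * hkey

end Beta

lemma sum_range_Smat_mul_betaFn (p : ℕ → ℝ) (hp : ∀ i, 1 ≤ i → 0 < p i) {N : ℕ}
    (hN : 1 ≤ N) :
    ∑ j ∈ Finset.range (N + 1), Smat p N (j + 1) * betaFn p (j + 1) = betaFn p N := by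
  obtain ⟨hlow, hK, hK₁⟩ := zeck_tailLen_spec N
  have hc : tailLen N + zeck N 0 = 2 * (carryLen N + zeck N 0) := by rw [tailLen]; ring
  rw [sum_range_Smat_mul p _ hN]
  rcases succ_eq_fibF_or_fibF_bounds hlow hK hK₁ with h | ⟨t, hlo, hhi⟩
  · exact row_betaFn_of_succ_eq_fibF p hp (zeck_le_one N 0) hc hN h
  · exact row_betaFn_of_fibF_bounds p hc hlo hhi

lemma eq_of_eq_sum_range_mul {A : ℕ → ℕ → ℝ} (hA : ∀ N, 1 ≤ N → A N (N + 1) ≠ 0)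
    {u w : ℕ → ℝ}
    (hu : ∀ N, 1 ≤ N → u N = ∑ j ∈ Finset.range (N + 1), A N (j + 1) * u (j + 1))
    (hw : ∀ N, 1 ≤ N → w N = ∑ j ∈ Finset.range (N + 1), A N (j + 1) * w (j + 1))
    (h₁ : u 1 = w 1) : ∀ n, 1 ≤ n → u n = w n := by
  intro n hn
  induction n using Nat.strong_induction_on with
  | _ n ih =>
    obtain rfl | hn := hn.eq_or_lt
    · exact h₁
    obtain ⟨N, rfl⟩ : ∃ N, n = N + 1 := ⟨n - 1, by omega⟩
    have hN : 1 ≤ N := by omega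
    have hrow := (hu N hN).symm.trans ((ih N (by omega) hN).trans (hw N hN))
    rw [Finset.sum_range_succ, Finset.sum_range_succ,
      Finset.sum_congr rfl fun j hj => by
        rw [ih (j + 1) (by simp at hj; omega) (by omega)]] at hrow
    exact mul_left_cancel₀ (hA N hN) (add_left_cancel hrow)

theorem stmt4_general (p : ℕ → ℝ) (hp : ∀ i, 1 ≤ i → 0 < p i ∧ p i ≤ 1)
    (v : ℕ → ℝ) :
    (∀ i, 1 ≤ i → v i = ∑' j : ℕ, Smat p i (j+1) * v (j+1)) ↔
    (∀ n, 1 ≤ n → v n = betaFn p n * v 1) := by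
  have hpos : ∀ i, 1 ≤ i → 0 < p i := fun i hi => (hp i hi).1
  have hβv : ∀ N, 1 ≤ N → betaFn p N * v 1 =
      ∑ j ∈ Finset.range (N + 1), Smat p N (j + 1) * (betaFn p (j + 1) * v 1) := fun N hN => by
    simp only [← mul_assoc, ← Finset.sum_mul, sum_range_Smat_mul_betaFn p hpos hN]
  simp only [tsum_Smat_mul]
  constructor
  · intro hv
    refine eq_of_eq_sum_range_mul (fun N _ => ?_) hv hβv (by rw [betaFn_one, one_mul])
    rw [Smat_self_succ]
    exact (Pprod_pos p hpos _).ne'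
  · intro hv i hi
    rw [hv i hi, hβv i hi]
    exact Finset.sum_congr rfl fun j _ => by rw [hv (j + 1) (by omega)]

/-- Let `S̃` be `S` with its first row and column removed, and let
`v = (v_i)_{i ≥ 1}` be a bounded real sequence.  Then `S̃ v = v` (i.e.
`v i = ∑_{j ≥ 1} S̃ i j * v j` for all `i ≥ 1`) if and only if `v n = β(n) * v 1` for
all `n ≥ 1`. -/
theorem stmt4 (p : ℕ → ℝ) (hp : ∀ i, 1 ≤ i → 0 < p i ∧ p i ≤ 1)
    (v : ℕ → ℝ) (hv : ∃ C : ℝ, ∀ i, |v i| ≤ C) :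
    (∀ i, 1 ≤ i → v i = ∑' j : ℕ, Smat p i (j+1) * v (j+1)) ↔
    (∀ n, 1 ≤ n → v n = betaFn p n * v 1) :=
  stmt4_general p hp v
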